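/- Fix n ∈ ℕ and a function f : (Fin n → Bool) → ℤ such that |f(S) − f(S')| = 1 for every pair of adjacent states S, S'. Then for any two states S and S', b(S) − a(S) + 2·f(S) ≡ b(S') − a(S') + 2·f(S') (mod 4). -/

import Mathlib

/-! Since `a(S) + b(S) = n`, the quantity equals `2 (b(S) + f(S)) - n`. Switching one smoothing
moves both `b` and `f` by `±1`, hence `b + f` by an even amount and the quantity by a multiple
of `4`; and any two states are joined by a chain of single switches. -/

open Finset

/-- `a(S)`: the number of `A`-smoothings (coordinates where `S` is `false`). -/
def aCount {n : ℕ} (S : Fin n → Bool) : ℕ := (Finset.univ.filter fun i => S i = false).card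

/-- `b(S)`: the number of `B`-smoothings (coordinates where `S` is `true`). -/
def bCount {n : ℕ} (S : Fin n → Bool) : ℕ := (Finset.univ.filter fun i => S i = true).card

/-- Two states are adjacent if they differ in exactly one coordinate. -/
def Adjacent {n : ℕ} (S S' : Fin n → Bool) : Prop :=
  ∃ i : Fin n, S' = Function.update S i (!(S i))

open Function Relation

lemma aCount_add_bCount {n : ℕ} (S : Fin n → Bool) : aCount S + bCount S = n := by
  simpa [aCount, bCount] using
    card_filter_add_card_filter_not (s := univ) (fun i => S i = false)

lemma bCount_update_not {n : ℕ} (S : Fin n → Bool) (i : Fin n) :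
    (bCount (update S i (!S i)) : ℤ) = bCount S + if S i then -1 else 1 := by
  simp only [bCount, card_filter]
  push_cast
  rw [← sum_erase_add _ _ (mem_univ i), ← sum_erase_add univ _ (mem_univ i)]
  rw [sum_congr rfl fun j hj => by rw [update_of_ne (ne_of_mem_erase hj)]]
  cases S i <;> simp

lemma abs_bCount_sub_of_adjacent {n : ℕ} {S S' : Fin n → Bool} (h : Adjacent S S') :
    |(bCount S : ℤ) - bCount S'| = 1 := by
  obtain ⟨i, rfl⟩ := h
  rw [bCount_update_not]
  cases S i <;> simp

lemma modEq_four_of_adjacent {n : ℕ} {f : (Fin n → Bool) → ℤ}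
    (hf : ∀ S S' : Fin n → Bool, Adjacent S S' → |f S - f S'| = 1)
    {S S' : Fin n → Bool} (h : Adjacent S S') :
    ((bCount S : ℤ) - (aCount S : ℤ) + 2 * f S) ≡
      ((bCount S' : ℤ) - (aCount S' : ℤ) + 2 * f S') [ZMOD 4] := by
  have hf' := abs_eq (zero_le_one' ℤ) |>.mp (hf S S' h)
  have hb := abs_eq (zero_le_one' ℤ) |>.mp (abs_bCount_sub_of_adjacent h)
  have hS := aCount_add_bCount S
  have hS' := aCount_add_bCount S'
  rw [Int.modEq_iff_dvd]
  omega

lemma reflTransGen_adjacent_of_forall_notMem {n : ℕ} (s : Finset (Fin n)) :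
    ∀ S S' : Fin n → Bool, (∀ i ∉ s, S i = S' i) → ReflTransGen Adjacent S S' := by
  induction s using Finset.induction_on with
  | empty => exact fun S S' h => funext (fun i => h i (notMem_empty i)) ▸ .refl
  | insert a s _ ih =>
    intro S S' h
    refine .trans ?_ (ih (update S a (S' a)) S' fun i hi => ?_)
    · by_cases hSa : S a = S' a
      · rw [← hSa, update_eq_self]
      · exact .single ⟨a, by rw [Bool.eq_not.mpr (Ne.symm hSa)]⟩
    · by_cases hia : i = a
      · rw [hia, update_self]
      · rw [update_of_ne hia, h i (by simp [hia, hi])]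

lemma reflTransGen_adjacent {n : ℕ} (S S' : Fin n → Bool) : ReflTransGen Adjacent S S' :=
  reflTransGen_adjacent_of_forall_notMem univ S S' fun i hi => absurd (mem_univ i) hi

/-- Equation (5.2) of the paper: if `f` changes by exactly `±1` under
switching one smoothing, then `b(S) - a(S) + 2·f(S)` is constant modulo `4` over all
states `S`. -/
theorem state_sum_mod_four (n : ℕ) (f : (Fin n → Bool) → ℤ)
    (hf : ∀ S S' : Fin n → Bool, Adjacent S S' → |f S - f S'| = 1) :
    ∀ S S' : Fin n → Bool,
      ((bCount S : ℤ) - (aCount S : ℤ) + 2 * f S) ≡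
        ((bCount S' : ℤ) - (aCount S' : ℤ) + 2 * f S') [ZMOD 4] := by
  intro S S'
  induction reflTransGen_adjacent S S' with
  | refl => rfl
  | tail _ hTU ih => exact ih.trans (modEq_four_of_adjacent hf hTU)
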